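/- arXiv:2504.10305 — 3 statements merged into one kernel-verified Lean document; each statement's English description precedes it below -/
import Mathlib

section
/- Let L be a Lie algebra over a commutative ring with unit and q_1,…,q_m ∈ L. Every nested commutator without repeats ⁅q_{i_1}, ⁅…⁅q_{i_k}, q_j⁆…⁆⁆ (where k ≥ 1 and the indices i_1,…,i_k, j ∈ [m] are pairwise distinct) lies in the Lie subalgebra of L generated by the set of all elements c_q(I, q_i) with I ⊆ [m] nonempty, i ∈ [m], and max(I) > i. -/
/-- For `q : Fin m → L` and `I = {t₁ < t₂ < … < t_s} ⊆ [m]`, the nested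
commutator `c_q(I, x) = ⁅q t₁, ⁅q t₂, … ⁅q t_s, x⁆…⁆⁆`, with `c_q(∅, x) = x`. -/
def cNest {L : Type*} [LieRing L] {m : ℕ} (q : Fin m → L) (I : Finset (Fin m)) (x : L) : L :=
  (I.sort (· ≤ ·)).foldr (fun t acc => ⁅q t, acc⁆) x

/-!
Write `S_A` (`repeatFreeSpan R q A`) for the Lie subalgebra generated by the repeat-free
generators `c_q(I, q_i)` with `I ∪ {i} ⊆ A`, `i ∉ I` and `i < max I`. The heart of the proof
is that `ad (q a)` maps `S_A` into `S_{A ∪ {a}}` whenever `a ∉ A`; a nested commutator without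
repeats is then built letter by letter. Since `ad (q a)` is a derivation it suffices to treat a
generator `c_q(I, q_i)`, and by induction on `|A|` we may assume `A = I ∪ {i}`. If
`a < t := min I`, then `⁅q a, c_q(I, q_i)⁆ = c_q(I ∪ {a}, q_i)` is a generator. Otherwise write
`c_q(I, q_i) = ⁅q t, X⁆` and expand `⁅q a, ⁅q t, X⁆⁆ = ⁅⁅q a, q t⁆, X⁆ + ⁅q t, ⁅q a, X⁆⁆`:
the first term is a bracket of generators (for `I = {t}`, a generator up to sign), and in the
second one `⁅q a, X⁆` has fewer letters while `t` is inserted into a set of the same size as `A`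
but with `t < a`. So the induction runs lexicographically on `(|A|, a)`.
-/

section

open LieSubalgebra Finset

variable {R L : Type*} [CommRing R] [LieRing L] [LieAlgebra R L] {m : ℕ}

theorem LieSubalgebra.lie_mem_of_mem_lieSpan {s : Set L} {K : LieSubalgebra R L}
    (hK : lieSpan R L s ≤ K) {y : L} (hy : ∀ x ∈ s, ⁅y, x⁆ ∈ K) {x : L}
    (hx : x ∈ lieSpan R L s) : ⁅y, x⁆ ∈ K := by
  induction hx using lieSpan_induction with
  | mem x hx => exact hy x hx
  | zero => simp
  | add x z _ _ hx hz => simpa only [lie_add] using add_mem hx hz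
  | smul c x _ hx => simpa only [lie_smul] using K.smul_mem c hx
  | lie x z hxs hzs hx hz =>
    rw [leibniz_lie]
    exact add_mem (K.lie_mem hx (hK hzs)) (K.lie_mem (hK hxs) hz)

section cNest

variable (q : Fin m → L)

theorem cNest_empty (x : L) : cNest q ∅ x = x := by
  simp [cNest]

theorem cNest_insert_of_forall_lt {I : Finset (Fin m)} {a : Fin m} (h : ∀ b ∈ I, a < b)
    (x : L) : cNest q (insert a I) x = ⁅q a, cNest q I x⁆ := by
  rw [cNest, sort_insert _ (fun b hb => (h b hb).le) (fun ha => (h a ha).false)]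
  rfl

theorem cNest_singleton (a : Fin m) (x : L) : cNest q {a} x = ⁅q a, x⁆ := by
  rw [← insert_empty_eq, cNest_insert_of_forall_lt q (by simp), cNest_empty]

theorem cNest_pair {a b : Fin m} (hab : a < b) (x : L) :
    cNest q {a, b} x = ⁅q a, ⁅q b, x⁆⁆ := by
  rw [cNest_insert_of_forall_lt q (by simpa), cNest_singleton]

end cNest

section RepeatFree

variable (R) (q : Fin m → L)

def repeatFreeGenerators (A : Finset (Fin m)) : Set L :=
  {z | ∃ (I : Finset (Fin m)) (i : Fin m),
    I ⊆ A ∧ i ∈ A ∧ i ∉ I ∧ (∃ b ∈ I, i < b) ∧ z = cNest q I (q i)}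

def repeatFreeSpan (A : Finset (Fin m)) : LieSubalgebra R L :=
  lieSpan R L (repeatFreeGenerators q A)

variable {R q}

theorem repeatFreeSpan_mono {A B : Finset (Fin m)} (h : A ⊆ B) :
    repeatFreeSpan R q A ≤ repeatFreeSpan R q B := by
  refine lieSpan_mono ?_
  rintro _ ⟨I, i, hIA, hiA, hiI, hib, rfl⟩
  exact ⟨I, i, hIA.trans h, h hiA, hiI, hib, rfl⟩

theorem cNest_mem_repeatFreeSpan {A I : Finset (Fin m)} {i b : Fin m} (hIA : I ⊆ A)
    (hiA : i ∈ A) (hiI : i ∉ I) (hb : b ∈ I) (hib : i < b) :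
    cNest q I (q i) ∈ repeatFreeSpan R q A :=
  subset_lieSpan ⟨I, i, hIA, hiA, hiI, ⟨b, hb, hib⟩, rfl⟩

theorem lie_mem_repeatFreeSpan {A : Finset (Fin m)} {a b : Fin m} (ha : a ∈ A) (hb : b ∈ A)
    (hab : a ≠ b) : ⁅q a, q b⁆ ∈ repeatFreeSpan R q A := by
  rcases hab.lt_or_gt with hab | hba
  · rw [← lie_skew, ← cNest_singleton]
    exact neg_mem (cNest_mem_repeatFreeSpan (by simpa) ha (by simpa using hab.ne)
      (mem_singleton_self b) hab)
  · rw [← cNest_singleton]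
    exact cNest_mem_repeatFreeSpan (by simpa) hb (by simpa using hba.ne)
      (mem_singleton_self a) hba

theorem lie_lie_mem_repeatFreeSpan {A : Finset (Fin m)} {i t a : Fin m} (hi : i ∈ A)
    (ht : t ∈ A) (ha : a ∈ A) (hit : i < t) (hta : t < a) :
    ⁅q a, ⁅q t, q i⁆⁆ ∈ repeatFreeSpan R q A := by
  have hia := hit.trans hta
  rw [leibniz_lie, ← lie_skew, ← cNest_pair q hia, ← cNest_pair q hta]
  exact add_mem
    (neg_mem (cNest_mem_repeatFreeSpan (insert_subset hi (by simpa)) ht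
      (by simp [hit.ne', hta.ne]) (mem_insert_of_mem (mem_singleton_self a)) hta))
    (cNest_mem_repeatFreeSpan (insert_subset ht (by simpa)) hi
      (by simp [hit.ne, hia.ne]) (mem_insert_of_mem (mem_singleton_self a)) hia)

theorem lie_lie_cNest_mem_repeatFreeSpan {J : Finset (Fin m)} {i t a d : Fin m} (hiJ : i ∉ J)
    (hd : d ∈ J) (hid : i < d) (hat : a ≠ t)
    (ha : ∀ y ∈ repeatFreeSpan R q (insert i J),
      ⁅q a, y⁆ ∈ repeatFreeSpan R q (insert a (insert i J)))
    (ht : ∀ y ∈ repeatFreeSpan R q (insert a (insert i J)),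
      ⁅q t, y⁆ ∈ repeatFreeSpan R q (insert t (insert a (insert i J)))) :
    ⁅q a, ⁅q t, cNest q J (q i)⁆⁆ ∈ repeatFreeSpan R q (insert a (insert i (insert t J))) := by
  have hX : cNest q J (q i) ∈ repeatFreeSpan R q (insert i J) :=
    cNest_mem_repeatFreeSpan (subset_insert i J) (mem_insert_self i J) hiJ hd hid
  rw [leibniz_lie]
  refine add_mem (lie_mem _ ?_ ?_) ?_
  · exact lie_mem_repeatFreeSpan (mem_insert_self a _) (by simp) hat
  · exact repeatFreeSpan_mono (by grind) hX
  · exact repeatFreeSpan_mono (by grind) (ht _ (ha _ hX))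

theorem lie_cNest_mem_repeatFreeSpan_insert {A : Finset (Fin m)} {a : Fin m} (ha : a ∉ A)
    (ih : ∀ (B : Finset (Fin m)) (c : Fin m), c ∉ B →
      B.card < A.card ∨ B.card = A.card ∧ c < a →
      ∀ y ∈ repeatFreeSpan R q B, ⁅q c, y⁆ ∈ repeatFreeSpan R q (insert c B))
    {I : Finset (Fin m)} {i b : Fin m} (hIA : I ⊆ A) (hiA : i ∈ A) (hiI : i ∉ I) (hb : b ∈ I)
    (hib : i < b) : ⁅q a, cNest q I (q i)⁆ ∈ repeatFreeSpan R q (insert a A) := by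
  by_cases hA : insert i I = A
  swap
  · have hsub : insert i I ⊂ A := ssubset_of_subset_of_ne (insert_subset hiA hIA) hA
    exact repeatFreeSpan_mono (insert_subset_insert a hsub.subset)
      (ih _ a (fun h => ha (hsub.subset h)) (Or.inl (card_lt_card hsub)) _
        (cNest_mem_repeatFreeSpan (subset_insert i I) (mem_insert_self i I) hiI hb hib))
  subst hA
  obtain ⟨t, J, rfl, htJ⟩ : ∃ t J, I = insert t J ∧ ∀ c ∈ J, t < c :=
    ⟨I.min' ⟨b, hb⟩, I.erase _, (insert_erase (min'_mem _ _)).symm,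
      fun c hc => min'_lt_of_mem_erase_min' _ _ hc⟩
  have htJ' : t ∉ J := fun h => (htJ t h).false
  simp only [mem_insert, not_or] at ha hiI
  obtain ⟨hai, hat, haJ⟩ := ha
  obtain ⟨hit, hiJ⟩ := hiI
  rcases Ne.lt_or_gt hat with hat | hta
  · rw [← cNest_insert_of_forall_lt q (I := insert t J) ?lt]
    · exact cNest_mem_repeatFreeSpan (insert_subset_insert a (subset_insert i _))
        (by simp) (by simp [Ne.symm hai, hit, hiJ]) (mem_insert_of_mem hb) hib
    · simp only [mem_insert, forall_eq_or_imp]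
      exact ⟨hat, fun c hc => hat.trans (htJ c hc)⟩
  rw [cNest_insert_of_forall_lt q htJ]
  rcases J.eq_empty_or_nonempty with rfl | ⟨c, hc⟩
  · rw [cNest_empty]
    exact lie_lie_mem_repeatFreeSpan (by simp) (by simp) (by simp)
      (by rwa [mem_singleton.mp hb] at hib) hta
  obtain ⟨d, hd, hid⟩ : ∃ d ∈ J, i < d := by
    obtain rfl | hbJ := mem_insert.mp hb
    exacts [⟨c, hc, hib.trans (htJ c hc)⟩, ⟨b, hbJ, hib⟩]
  refine lie_lie_cNest_mem_repeatFreeSpan hiJ hd hid hat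
    (ih _ a (by simp [hai, haJ]) (Or.inl ?_))
    (ih _ t (by simp [Ne.symm hat, Ne.symm hit, htJ']) (Or.inr ⟨?_, hta⟩))
  · rw [insert_comm i t]
    exact card_lt_card (ssubset_insert (by simp [Ne.symm hit, htJ']))
  · rw [card_insert_of_notMem (by simp [hai, haJ]), card_insert_of_notMem hiJ,
      card_insert_of_notMem (by simp [hit, hiJ]), card_insert_of_notMem htJ']

theorem lie_mem_repeatFreeSpan_insert {A : Finset (Fin m)} {a : Fin m} (ha : a ∉ A) {x : L}
    (hx : x ∈ repeatFreeSpan R q A) : ⁅q a, x⁆ ∈ repeatFreeSpan R q (insert a A) := by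
  induction hn : A.card using Nat.strong_induction_on generalizing A a x with
  | _ n ihCard =>
  induction a using WellFoundedLT.induction generalizing A x with
  | _ a ihLetter =>
  refine lie_mem_of_mem_lieSpan (repeatFreeSpan_mono (subset_insert a A)) ?_ hx
  rintro _ ⟨I, i, hIA, hiA, hiI, ⟨b, hb, hib⟩, rfl⟩
  refine lie_cNest_mem_repeatFreeSpan_insert ha ?_ hIA hiA hiI hb hib
  rintro B c hcB (hlt | ⟨heq, hca⟩) y hy
  · exact ihCard _ (hn ▸ hlt) hcB hy rfl
  · exact ihLetter c hca hcB hy (heq.trans hn)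

theorem foldr_lie_mem_repeatFreeSpan {l : List (Fin m)} (hl : l ≠ []) (hnd : l.Nodup)
    {j : Fin m} (hj : j ∉ l) :
    l.foldr (fun t acc => ⁅q t, acc⁆) (q j) ∈ repeatFreeSpan R q (insert j l.toFinset) := by
  induction l with
  | nil => exact absurd rfl hl
  | cons a l ih =>
    obtain ⟨hal, hnd⟩ := List.nodup_cons.mp hnd
    simp only [List.mem_cons, not_or] at hj
    rw [List.foldr_cons, List.toFinset_cons, insert_comm]
    rcases eq_or_ne l [] with rfl | hl
    · exact lie_mem_repeatFreeSpan (by simp) (by simp) (Ne.symm hj.1)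
    · exact lie_mem_repeatFreeSpan_insert (by simp [Ne.symm hj.1, hal]) (ih hl hnd hj.2)

end RepeatFree

end

/-- Let `L` be a Lie algebra over a commutative ring and
`q₁,…,q_m ∈ L`.  Every nested commutator without repeats
`⁅q_{i₁}, ⁅…⁅q_{i_k}, q_j⁆…⁆⁆` (`k ≥ 1`, indices pairwise distinct) lies in the
Lie subalgebra of `L` generated by the elements `c_q(I, q_i)` with `I ⊆ [m]`
nonempty and `max I > i`. -/
theorem nestedCommutator_mem_lieSpan {R : Type*} {L : Type*} [CommRing R]
    [LieRing L] [LieAlgebra R L] {m : ℕ} (q : Fin m → L)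
    (k : ℕ) (hk : 1 ≤ k) (is : Fin k → Fin m) (j : Fin m)
    (hdist : Function.Injective is) (hj : ∀ t, is t ≠ j) :
    (List.ofFn is).foldr (fun t acc => ⁅q t, acc⁆) (q j) ∈
      LieSubalgebra.lieSpan R L
        {z | ∃ (I : Finset (Fin m)) (hI : I.Nonempty) (i : Fin m),
          i < I.max' hI ∧ z = cNest q I (q i)} := by
  have hne : List.ofFn is ≠ [] := by
    rw [Ne, List.ofFn_eq_nil_iff]
    omega
  have hjn : j ∉ List.ofFn is := by simpa using hj
  refine LieSubalgebra.lieSpan_mono ?_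
    (foldr_lie_mem_repeatFreeSpan hne (List.nodup_ofFn.mpr hdist) hjn)
  rintro _ ⟨I, i, -, -, -, ⟨b, hb, hib⟩, rfl⟩
  exact ⟨I, ⟨b, hb⟩, i, hib.trans_le (I.le_max' b hb), rfl⟩
end

section
/- Let K be a flag simplicial complex on [m], let L be a Lie algebra over a commutative ring with unit, and let q_1,…,q_m ∈ L satisfy ⁅q_i, q_j⁆ = 0 for every {i,j} ∈ K. Then every nested commutator without repeats ⁅q_{i_1}, ⁅…⁅q_{i_k}, q_j⁆…⁆⁆ (k ≥ 1, indices pairwise distinct) lies in the Lie subalgebra of L generated by the GPTW generators { c_q(J∖{j'}, q_{j'}) : J ⊆ [m], j' ∈ Θ_K(J) }. -/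
/-- `K` is a simplicial complex on the vertex set `Fin m`. -/
def IsSimplicialComplex {m : ℕ} (K : Finset (Finset (Fin m))) : Prop :=
  (∀ I ∈ K, ∀ I' ⊆ I, I' ∈ K) ∧ ∅ ∈ K ∧ ∀ i : Fin m, ({i} : Finset (Fin m)) ∈ K

/-- `K` is flag: every set of vertices pairwise joined by `2`-element simplices
of `K` is itself a simplex of `K`. -/
def IsFlag {m : ℕ} (K : Finset (Finset (Fin m))) : Prop :=
  ∀ S : Finset (Fin m),
    (∀ i ∈ S, ∀ j ∈ S, i ≠ j → ({i, j} : Finset (Fin m)) ∈ K) → S ∈ K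

/-- `a` and `b` lie in the same connected component of the graph of the full
subcomplex `K_J` (reachability along edges of `K` inside `J`). -/
def connKJ {m : ℕ} (K : Finset (Finset (Fin m))) (J : Finset (Fin m)) :
    Fin m → Fin m → Prop :=
  Relation.ReflTransGen
    (fun a b => a ∈ J ∧ b ∈ J ∧ a ≠ b ∧ ({a, b} : Finset (Fin m)) ∈ K)

/-- `Θ_K(J)`: the set of vertices `j ∈ J` that are smallest in their connected
component of the graph of `K_J`, this component not containing `max J`. -/
def Theta {m : ℕ} (K : Finset (Finset (Fin m))) (J : Finset (Fin m)) (j : Fin m) : Prop :=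
  ∃ hj : j ∈ J, (∀ i ∈ J, connKJ K J j i → j ≤ i) ∧
    ¬ connKJ K J j (J.max' ⟨j, hj⟩)

/-!
Let `A` be the Lie subalgebra generated by the GPTW elements and induct on the length of a nest
without repeats. Brackets `⁅X, Y⁆` of two shorter nests without repeats lie in `A` by induction,
and modulo their span the letters of a nest other than the last two may be permuted freely,
since `ad` of a fresh letter maps this span into itself. So modulo `A` a nest with letter set `I`
ending in `⁅q y, q c⁆` depends only on `(y, c)`; call its class `f y c`. The Jacobi identity gives
`f y c = f a c - f a y`, so `f y c = g c - g y` with `g = f z` for `z = max I`. If `q i` and `q j`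
commute then `f i j = 0`, so `g` is constant on the components of the graph of `K_I`; and `g`
vanishes at `z` and at every `j' ∈ Θ_K(I)`, where `f z j' = c_q(I ∖ {j'}, q_{j'})` is a generator.
Each component contains `z` or has its least vertex in `Θ_K(I)`, hence `g = 0` and `f = 0`.
-/

section LieNest

variable {ι L : Type*} [LieRing L] (q : ι → L)

def lieNest (l : List ι) (x : L) : L :=
  l.foldr (fun t acc => ⁅q t, acc⁆) x

@[simp]
lemma lieNest_nil (x : L) : lieNest q [] x = x := rfl

@[simp]
lemma lieNest_cons (a : ι) (l : List ι) (x : L) :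
    lieNest q (a :: l) x = ⁅q a, lieNest q l x⁆ := rfl

lemma lieNest_append (l₁ l₂ : List ι) (x : L) :
    lieNest q (l₁ ++ l₂) x = lieNest q l₁ (lieNest q l₂ x) :=
  List.foldr_append

@[simp]
lemma lieNest_zero (l : List ι) : lieNest q l (0 : L) = 0 := by
  induction l <;> simp [*]

@[simp]
lemma lieNest_neg (l : List ι) (x : L) : lieNest q l (-x) = -lieNest q l x := by
  induction l <;> simp [*]

@[simp]
lemma lieNest_sub (l : List ι) (x y : L) :
    lieNest q l (x - y) = lieNest q l x - lieNest q l y := by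
  induction l <;> simp [*]

lemma lieNest_concat_swap (l : List ι) (a b : ι) :
    lieNest q (l ++ [a]) (q b) = -lieNest q (l ++ [b]) (q a) := by
  rw [lieNest_append, lieNest_append, ← lieNest_neg]
  exact congrArg _ (lie_skew (q a) (q b)).symm

lemma lieNest_concat_eq_zero (l : List ι) {a b : ι} (h : ⁅q a, q b⁆ = 0) :
    lieNest q (l ++ [a]) (q b) = 0 := by
  simp [lieNest_append, h]

lemma lieNest_jacobi (l : List ι) (a b c : ι) :
    lieNest q (l ++ [a, b]) (q c) =
      lieNest q (l ++ [b, a]) (q c) - lieNest q (l ++ [c, a]) (q b) := by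
  simp only [lieNest_append, lieNest_cons, lieNest_nil, ← lieNest_sub]
  rw [leibniz_lie (q a) (q b) (q c), ← lie_skew ⁅q a, q b⁆ (q c)]
  abel_nf

end LieNest

section NestBracketSpan

variable (R : Type*) {ι L : Type*} [CommRing R] [LieRing L] [LieAlgebra R L]

def nestBracketSpan (q : ι → L) (P : Finset ι) : Submodule R L :=
  Submodule.span R {x | ∃ (s t : List ι) (u v : ι), s ≠ [] ∧ t ≠ [] ∧
    (s ++ u :: (t ++ [v])).Nodup ∧ (∀ y ∈ s ++ u :: (t ++ [v]), y ∈ P) ∧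
    x = ⁅lieNest q s (q u), lieNest q t (q v)⁆}

variable {R} {q : ι → L}

lemma nestBracketSpan_mono {P P' : Finset ι} (h : P ⊆ P') :
    nestBracketSpan R q P ≤ nestBracketSpan R q P' := by
  refine Submodule.span_mono ?_
  rintro x ⟨s, t, u, v, hs, ht, hnd, hP, rfl⟩
  exact ⟨s, t, u, v, hs, ht, hnd, fun y hy => h (hP y hy), rfl⟩

lemma lie_mem_nestBracketSpan_insert [DecidableEq ι] {P : Finset ι} {x : ι} (hx : x ∉ P)
    {d : L} (hd : d ∈ nestBracketSpan R q P) :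
    ⁅q x, d⁆ ∈ nestBracketSpan R q (insert x P) := by
  suffices (nestBracketSpan R q P).map (LieAlgebra.ad R L (q x)) ≤
      nestBracketSpan R q (insert x P) from this ⟨d, hd, rfl⟩
  refine (Submodule.map_span_le _ _ _).mpr ?_
  rintro _ ⟨s, t, u, v, hs, ht, hnd, hP, rfl⟩
  have hxw : x ∉ s ++ u :: (t ++ [v]) := fun h => hx (hP x h)
  rw [LieAlgebra.ad_apply, leibniz_lie]
  refine add_mem (Submodule.subset_span ⟨x :: s, t, u, v, ?_⟩)
    (Submodule.subset_span ⟨s, x :: t, u, v, ?_⟩)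
  · refine ⟨List.cons_ne_nil _ _, ht, List.nodup_cons.mpr ⟨hxw, hnd⟩, fun y hy => ?_, rfl⟩
    rw [List.cons_append, List.mem_cons] at hy
    exact Finset.mem_insert.mpr (hy.imp_right (hP y))
  · have hperm : (s ++ u :: (x :: t ++ [v])).Perm (x :: (s ++ u :: (t ++ [v]))) := by
      simpa using List.perm_middle (l₁ := s ++ [u]) (a := x) (l₂ := t ++ [v])
    refine ⟨hs, List.cons_ne_nil _ _, hperm.nodup_iff.mpr (List.nodup_cons.mpr ⟨hxw, hnd⟩),
      fun y hy => ?_, rfl⟩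
    rw [hperm.mem_iff, List.mem_cons] at hy
    exact Finset.mem_insert.mpr (hy.imp_right (hP y))

lemma lieNest_sub_mem_nestBracketSpan_of_perm [DecidableEq ι] {p₁ p₂ : List ι}
    (hp : p₁.Perm p₂) {t : List ι} (ht : t ≠ []) {v : ι} (hnd : (p₁ ++ t ++ [v]).Nodup) :
    lieNest q (p₁ ++ t) (q v) - lieNest q (p₂ ++ t) (q v) ∈
      nestBracketSpan R q (p₁ ++ t ++ [v]).toFinset := by
  induction hp with
  | nil => simp
  | cons x _ ih =>
    rw [List.cons_append, List.cons_append, List.nodup_cons] at hnd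
    have hx := lie_mem_nestBracketSpan_insert (R := R) (q := q)
      (mt List.mem_toFinset.mp hnd.1) (ih hnd.2)
    simpa [lie_sub] using hx
  | swap x y l =>
    refine Submodule.subset_span ⟨[y], l ++ t, x, v, by simp, by simp [ht], ?_, ?_, ?_⟩
    · simpa using hnd
    · intro a ha
      simp only [List.mem_toFinset, List.mem_append, List.mem_cons, List.not_mem_nil] at ha ⊢
      tauto
    · simp only [List.cons_append, lieNest_cons, lieNest_nil]
      rw [leibniz_lie (q y) (q x)]
      abel
  | trans h₁₂ _ ih₁₂ ih₂₃ =>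
    have hperm := (h₁₂.append_right t).append_right [v]
    have h₂₃ := ih₂₃ (hperm.nodup_iff.mp hnd)
    rw [← List.toFinset_eq_of_perm _ _ hperm] at h₂₃
    simpa using add_mem (ih₁₂ hnd) h₂₃

lemma nestBracketSpan_le {A : LieSubalgebra R L} {P : Finset ι} {n : ℕ} (hP : P.card ≤ n + 2)
    (hA : ∀ l j, l ≠ [] → (l ++ [j]).Nodup → l.length ≤ n → lieNest q l (q j) ∈ A) :
    nestBracketSpan R q P ≤ A.toSubmodule := by
  classical
  refine Submodule.span_le.mpr ?_
  rintro _ ⟨s, t, u, v, hs, ht, hnd, hsub, rfl⟩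
  have hlen : s.length + t.length + 2 ≤ n + 2 := by
    have := Finset.card_le_card (s := (s ++ u :: (t ++ [v])).toFinset)
      (fun y hy => hsub y (List.mem_toFinset.mp hy))
    rw [List.toFinset_card_of_nodup hnd] at this
    simp only [List.length_append, List.length_cons, List.length_nil, zero_add] at this
    omega
  have hs₁ := List.length_pos_iff.mpr hs
  have ht₁ := List.length_pos_iff.mpr ht
  exact A.lie_mem (hA s u hs (hnd.sublist (by simp)) (by omega))
    (hA t v ht (hnd.sublist (by simp)) (by omega))

end NestBracketSpan

lemma Finset.sort_eq_sort_erase_append {ι : Type*} [LinearOrder ι] {s : Finset ι} {z : ι}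
    (hz : z ∈ s) (hle : ∀ b ∈ s, b ≤ z) :
    s.sort (· ≤ ·) = (s.erase z).sort (· ≤ ·) ++ [z] := by
  have hnd : ((s.erase z).sort (· ≤ ·) ++ [z]).Nodup := by
    simpa using (Finset.sort_nodup (s.erase z) (· ≤ ·)).concat (by simp)
  have hsorted : ((s.erase z).sort (· ≤ ·) ++ [z]).Pairwise (· ≤ ·) :=
    List.pairwise_append.mpr ⟨Finset.pairwise_sort _ _, List.pairwise_singleton _ _,
      fun b hb _ h => List.mem_singleton.mp h ▸
        hle b (Finset.mem_of_mem_erase ((Finset.mem_sort _).mp hb))⟩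
  have hs : ((s.erase z).sort (· ≤ ·) ++ [z]).toFinset = s := by
    ext b
    by_cases hb : b = z <;> simp [hb, hz]
  nth_rw 1 [← hs]
  exact (List.toFinset_sort _ hnd).mpr hsorted

section PairNest

variable {ι L : Type*} [LinearOrder ι] [LieRing L] (q : ι → L)

def pairNest (I : Finset ι) (y c : ι) : L :=
  lieNest q (((I.erase c).erase y).sort (· ≤ ·) ++ [y]) (q c)

lemma pairNest_swap (I : Finset ι) (y c : ι) : pairNest q I y c = -pairNest q I c y := by
  rw [pairNest, pairNest, Finset.erase_right_comm]
  exact lieNest_concat_swap q _ y c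

lemma pairNest_eq_zero_of_lie_eq_zero (I : Finset ι) {y c : ι} (h : ⁅q y, q c⁆ = 0) :
    pairNest q I y c = 0 :=
  lieNest_concat_eq_zero q _ h

lemma pairNest_self (I : Finset ι) (y : ι) : pairNest q I y y = 0 :=
  pairNest_eq_zero_of_lie_eq_zero q I (lie_self _)

variable {R : Type*} [CommRing R] [LieAlgebra R L] {A : LieSubalgebra R L} {I : Finset ι} {q}

lemma mkQ_lieNest_eq_mkQ_pairNest (hB : nestBracketSpan R q I ≤ A.toSubmodule) {p : List ι}
    (hp : p.Nodup) {y c : ι} (hy : y ∈ I) (hc : c ∈ I) (hyc : y ≠ c)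
    (hp_mem : ∀ x, x ∈ p ↔ x ≠ y ∧ x ≠ c ∧ x ∈ I) :
    A.toSubmodule.mkQ (lieNest q (p ++ [y]) (q c)) = A.toSubmodule.mkQ (pairNest q I y c) := by
  have hperm : p.Perm (((I.erase c).erase y).sort (· ≤ ·)) :=
    List.perm_of_nodup_nodup_toFinset_eq hp (Finset.sort_nodup _ _) (by ext; simp [hp_mem])
  have hnd : (p ++ [y] ++ [c]).Nodup := by
    simp +contextual [List.nodup_append, hp, hp_mem, hyc]
  rw [Submodule.mkQ_apply, Submodule.mkQ_apply, Submodule.Quotient.eq]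
  refine hB (nestBracketSpan_mono (fun x hx => ?_)
    (lieNest_sub_mem_nestBracketSpan_of_perm hperm (List.cons_ne_nil _ _) hnd))
  simp only [List.mem_toFinset, List.mem_append, List.mem_singleton, hp_mem] at hx
  rcases hx with (hx | rfl) | rfl
  exacts [hx.2.2, hy, hc]

lemma mkQ_pairNest_eq_sub (hB : nestBracketSpan R q I ≤ A.toSubmodule) {y c a : ι}
    (hy : y ∈ I) (hc : c ∈ I) (ha : a ∈ I) :
    A.toSubmodule.mkQ (pairNest q I y c) =
      A.toSubmodule.mkQ (pairNest q I a c) - A.toSubmodule.mkQ (pairNest q I a y) := by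
  rcases eq_or_ne y c with rfl | hyc
  · simp [pairNest_self]
  rcases eq_or_ne a y with rfl | hay
  · simp [pairNest_self]
  rcases eq_or_ne a c with rfl | hac
  · simp [pairNest_self, pairNest_swap q I a y]
  set T := (((I.erase c).erase y).erase a).sort (· ≤ ·)
  have hT : T.Nodup := Finset.sort_nodup _ _
  have hTmem (x : ι) : x ∈ T ↔ x ≠ a ∧ x ≠ y ∧ x ≠ c ∧ x ∈ I := by
    simp only [T, Finset.mem_sort, Finset.mem_erase]
  have hcons {x : ι} (hx : x ∉ T) : (T ++ [x]).Nodup := by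
    simpa using hT.concat hx
  have h₁ := mkQ_lieNest_eq_mkQ_pairNest hB (hcons (by simp [hTmem])) hy hc hyc
    (p := T ++ [a]) (fun x => by simp only [List.mem_append, List.mem_singleton, hTmem]; grind)
  have h₂ := mkQ_lieNest_eq_mkQ_pairNest hB (hcons (by simp [hTmem])) ha hc hac
    (p := T ++ [y]) (fun x => by simp only [List.mem_append, List.mem_singleton, hTmem]; grind)
  have h₃ := mkQ_lieNest_eq_mkQ_pairNest hB (hcons (by simp [hTmem])) ha hy hay
    (p := T ++ [c]) (fun x => by simp only [List.mem_append, List.mem_singleton, hTmem]; grind)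
  rw [← h₁, ← h₂, ← h₃]
  simp only [List.append_assoc, List.singleton_append]
  rw [lieNest_jacobi, map_sub]

end PairNest

def gptwGenerators {L : Type*} [LieRing L] {m : ℕ} (K : Finset (Finset (Fin m)))
    (q : Fin m → L) : Set L :=
  {z | ∃ (J : Finset (Fin m)) (j' : Fin m), Theta K J j' ∧ z = cNest q (J.erase j') (q j')}

section Graph

variable {R L : Type*} [CommRing R] [LieRing L] [LieAlgebra R L] {m : ℕ}
  {K : Finset (Finset (Fin m))} {q : Fin m → L} {A : LieSubalgebra R L} {I : Finset (Fin m)}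

lemma exists_theta_connKJ_of_not_connKJ {x : Fin m} (hx : x ∈ I) (hI : I.Nonempty)
    (h : ¬ connKJ K I x (I.max' hI)) : ∃ c, Theta K I c ∧ connKJ K I x c := by
  classical
  set C := I.filter (connKJ K I x)
  have hC : C.Nonempty := ⟨x, Finset.mem_filter.mpr ⟨hx, .refl⟩⟩
  obtain ⟨hcI, hxc⟩ := Finset.mem_filter.mp (C.min'_mem hC)
  refine ⟨C.min' hC, ⟨hcI, fun i hi hci => C.min'_le i ?_, fun hcz => h (hxc.trans hcz)⟩,
    hxc⟩
  exact Finset.mem_filter.mpr ⟨hi, hxc.trans hci⟩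

lemma pairNest_max'_eq_cNest (hI : I.Nonempty) {c : Fin m} (hc : c ≠ I.max' hI) :
    pairNest q I (I.max' hI) c = cNest q (I.erase c) (q c) := by
  rw [cNest, Finset.sort_eq_sort_erase_append (z := I.max' hI)
    (Finset.mem_erase.mpr ⟨hc.symm, I.max'_mem hI⟩)
    (fun b hb => I.le_max' b (Finset.mem_of_mem_erase hb))]
  rfl

lemma mkQ_pairNest_eq_of_connKJ
    (hcomm : ∀ i j : Fin m, ({i, j} : Finset (Fin m)) ∈ K → ⁅q i, q j⁆ = 0)
    (hB : nestBracketSpan R q I ≤ A.toSubmodule) {a b c : Fin m} (ha : a ∈ I)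
    (hbc : connKJ K I b c) :
    A.toSubmodule.mkQ (pairNest q I a b) = A.toSubmodule.mkQ (pairNest q I a c) := by
  induction hbc with
  | refl => rfl
  | tail _ hedge ih =>
    obtain ⟨hb, hc, -, hK⟩ := hedge
    have hrel := mkQ_pairNest_eq_sub hB hb hc ha
    rw [pairNest_eq_zero_of_lie_eq_zero q I (hcomm _ _ hK), map_zero] at hrel
    rw [ih, eq_of_sub_eq_zero hrel.symm]

lemma pairNest_mem (hcomm : ∀ i j : Fin m, ({i, j} : Finset (Fin m)) ∈ K → ⁅q i, q j⁆ = 0)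
    (hB : nestBracketSpan R q I ≤ A.toSubmodule) (hgen : gptwGenerators K q ⊆ A) {y c : Fin m}
    (hy : y ∈ I) (hc : c ∈ I) :
    pairNest q I y c ∈ A := by
  have hI : I.Nonempty := ⟨y, hy⟩
  have hzI := I.max'_mem hI
  have hmax (x : Fin m) (hx : x ∈ I) : A.toSubmodule.mkQ (pairNest q I (I.max' hI) x) = 0 := by
    by_cases hxz : connKJ K I x (I.max' hI)
    · rw [mkQ_pairNest_eq_of_connKJ hcomm hB hzI hxz, pairNest_self, map_zero]
    obtain ⟨c', hθ, hxc'⟩ := exists_theta_connKJ_of_not_connKJ hx hI hxz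
    have hc'z : c' ≠ I.max' hI := fun h => hθ.2.2 (h ▸ .refl)
    rw [mkQ_pairNest_eq_of_connKJ hcomm hB hzI hxc', pairNest_max'_eq_cNest hI hc'z]
    exact (Submodule.Quotient.mk_eq_zero _).mpr (hgen ⟨I, c', hθ, rfl⟩)
  refine (Submodule.Quotient.mk_eq_zero _).mp ?_
  rw [← Submodule.mkQ_apply, mkQ_pairNest_eq_sub hB hy hc hzI, hmax c hc, hmax y hy, sub_zero]

lemma lieNest_mem_of_length_le
    (hcomm : ∀ i j : Fin m, ({i, j} : Finset (Fin m)) ∈ K → ⁅q i, q j⁆ = 0)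
    (hgen : gptwGenerators K q ⊆ A) (n : ℕ) :
    ∀ (l : List (Fin m)) (j : Fin m), l ≠ [] → (l ++ [j]).Nodup → l.length ≤ n →
      lieNest q l (q j) ∈ A := by
  induction n with
  | zero => exact fun l _ hl _ hlen => absurd (List.length_eq_zero_iff.mp (by omega)) hl
  | succ n ih =>
    intro l j hl hnd hlen
    obtain ⟨p, y, rfl⟩ := (List.eq_nil_or_concat' l).resolve_left hl
    set I := (p ++ [y] ++ [j]).toFinset
    have hcard : I.card ≤ n + 2 := (List.toFinset_card_le _).trans <| by
      simp only [List.length_append, List.length_singleton] at hlen ⊢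
      omega
    have hB : nestBracketSpan R q I ≤ A.toSubmodule := nestBracketSpan_le hcard ih
    obtain ⟨hp, hyj, hpyj⟩ : p.Nodup ∧ y ≠ j ∧ ∀ a ∈ p, a ≠ y ∧ a ≠ j := by
      simpa [List.nodup_append] using hnd
    have hp_mem (x : Fin m) : x ∈ p ↔ x ≠ y ∧ x ≠ j ∧ x ∈ I := by
      simp only [I, List.mem_toFinset, List.mem_append, List.mem_singleton]
      grind
    refine (Submodule.Quotient.mk_eq_zero _).mp ?_
    rw [← Submodule.mkQ_apply,
      mkQ_lieNest_eq_mkQ_pairNest hB hp (by simp [I]) (by simp [I]) hyj hp_mem]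
    exact (Submodule.Quotient.mk_eq_zero _).mpr
      (pairNest_mem hcomm hB hgen (by simp [I]) (by simp [I]))

end Graph

theorem nestedCommutator_mem_GPTW_lieSpan_general {R : Type*} {L : Type*} [CommRing R]
    [LieRing L] [LieAlgebra R L] {m : ℕ} (K : Finset (Finset (Fin m)))
    (q : Fin m → L)
    (hcomm : ∀ i j : Fin m, ({i, j} : Finset (Fin m)) ∈ K → ⁅q i, q j⁆ = 0)
    (k : ℕ) (hk : 1 ≤ k) (is : Fin k → Fin m) (j : Fin m)
    (hdist : Function.Injective is) (hj : ∀ t, is t ≠ j) :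
    (List.ofFn is).foldr (fun t acc => ⁅q t, acc⁆) (q j) ∈
      LieSubalgebra.lieSpan R L
        {z | ∃ (J : Finset (Fin m)) (j' : Fin m),
          Theta K J j' ∧ z = cNest q (J.erase j') (q j')} := by
  have hne : List.ofFn is ≠ [] := by
    simpa using Nat.one_le_iff_ne_zero.mp hk
  have hnd : (List.ofFn is ++ [j]).Nodup := by
    simpa using (List.nodup_ofFn.mpr hdist).concat (by simpa using hj)
  exact lieNest_mem_of_length_le hcomm LieSubalgebra.subset_lieSpan k _ j hne hnd (by simp)

/-- Let `K` be a flag simplicial complex on `[m]`, `L` a Lie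
algebra over a commutative ring, and `q₁,…,q_m ∈ L` with `⁅qᵢ, qⱼ⁆ = 0` for
every `{i,j} ∈ K`.  Then every nested commutator without repeats lies in the
Lie subalgebra of `L` generated by the GPTW generators
`{c_q(J∖{j'}, q_{j'}) : J ⊆ [m], j' ∈ Θ_K(J)}`. -/
theorem nestedCommutator_mem_GPTW_lieSpan {R : Type*} {L : Type*} [CommRing R]
    [LieRing L] [LieAlgebra R L] {m : ℕ} (K : Finset (Finset (Fin m)))
    (hK : IsSimplicialComplex K) (hflag : IsFlag K)
    (q : Fin m → L)
    (hcomm : ∀ i j : Fin m, ({i, j} : Finset (Fin m)) ∈ K → ⁅q i, q j⁆ = 0)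
    (k : ℕ) (hk : 1 ≤ k) (is : Fin k → Fin m) (j : Fin m)
    (hdist : Function.Injective is) (hj : ∀ t, is t ≠ j) :
    (List.ofFn is).foldr (fun t acc => ⁅q t, acc⁆) (q j) ∈
      LieSubalgebra.lieSpan R L
        {z | ∃ (J : Finset (Fin m)) (j' : Fin m),
          Theta K J j' ∧ z = cNest q (J.erase j') (q j')} :=
  nestedCommutator_mem_GPTW_lieSpan_general K q hcomm k hk is j hdist hj
end

section
/- Let K be a flag simplicial complex on [m] with RC_K the associated right-angled Coxeter group with generators g_1,…,g_m. Let k ≥ 1, let i_1,…,i_k, j ∈ [m] be arbitrary indices, and let c := (g_{i_1}, (g_{i_2}, …, (g_{i_k}, g_j)…)) be the nested group commutator of length k+1, where (x,y) = x⁻¹y⁻¹xy. Then (g_{i_1}, c) · c⁻² ∈ γ_{k+3}(RC_K). (Equivalently, in the associated graded Lie algebra, [ḡ_{i_1}, x] = h(x) for the nested commutator x of length k+1 beginning with ḡ_{i_1}, where h is the squaring operation.) -/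
/-- The relations of the right-angled Coxeter group associated with a
simplicial complex `K` on `[m]`. -/
def RCrels {m : ℕ} (K : Finset (Finset (Fin m))) : Set (FreeGroup (Fin m)) :=
  (Set.range fun i : Fin m => FreeGroup.of i * FreeGroup.of i) ∪
    {z | ∃ i j : Fin m, ({i, j} : Finset (Fin m)) ∈ K ∧
      z = FreeGroup.of i * FreeGroup.of j * (FreeGroup.of i)⁻¹ * (FreeGroup.of j)⁻¹}

/-- The right-angled Coxeter group `RC_K`. -/
def RC {m : ℕ} (K : Finset (Finset (Fin m))) : Type := PresentedGroup (RCrels K)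

instance {m : ℕ} (K : Finset (Finset (Fin m))) : Group (RC K) := by
  unfold RC; infer_instance

/-- The generators `g₁, …, g_m` of `RC_K`. -/
def RCgen {m : ℕ} (K : Finset (Finset (Fin m))) (i : Fin m) : RC K :=
  PresentedGroup.of (rels := RCrels K) i

/-- `γ_k(G)` for `k ≥ 1`, the lower central series in its classical indexing. -/
def gamma (G : Type*) [Group G] (k : ℕ) : Subgroup G := Subgroup.lowerCentralSeries (⊤ : Subgroup G) (k - 1)

/-- The group commutator `(x, y) = x⁻¹y⁻¹xy`. -/
def grpComm {G : Type*} [Group G] (x y : G) : G := x⁻¹ * y⁻¹ * x * y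

/-! The generators of `RC_K` are involutions, and for an involution `g` the identity
`(g, (g, x)) = (g, x)²` holds exactly, so the element in question is `1`. -/

theorem grpComm_grpComm_eq_sq_of_mul_self_eq_one {G : Type*} [Group G] {g : G} (hg : g * g = 1)
    (x : G) : grpComm g (grpComm g x) = grpComm g x ^ 2 := by
  have hinv : g⁻¹ = g := inv_eq_of_mul_eq_one_right hg
  simp only [grpComm, hinv, mul_inv_rev, inv_inv, pow_two, mul_assoc, hg, mul_one]

theorem RCgen_mul_self_eq_one {m : ℕ} (K : Finset (Finset (Fin m))) (i : Fin m) :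
    RCgen K i * RCgen K i = 1 :=
  (QuotientGroup.eq_one_iff _).mpr (Subgroup.subset_normalClosure (Or.inl ⟨i, rfl⟩))

theorem grpComm_head_nested_eq_square_general {m : ℕ} (K : Finset (Finset (Fin m)))
    (k : ℕ) (hk : 1 ≤ k) (is : Fin k → Fin m) (j : Fin m) :
    grpComm (RCgen K (is ⟨0, hk⟩))
        ((List.ofFn is).foldr (fun t acc => grpComm (RCgen K t) acc) (RCgen K j)) *
      (((List.ofFn is).foldr (fun t acc => grpComm (RCgen K t) acc) (RCgen K j)) ^ 2)⁻¹
      ∈ gamma (RC K) (k + 3) := by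
  obtain ⟨n, rfl⟩ := Nat.exists_eq_add_of_le' hk
  rw [show (⟨0, hk⟩ : Fin (n + 1)) = 0 from rfl, List.ofFn_succ, List.foldr_cons,
    grpComm_grpComm_eq_sq_of_mul_self_eq_one (RCgen_mul_self_eq_one K _), mul_inv_cancel]
  exact one_mem _

/-- Let `K` be a flag simplicial complex on `[m]`, let
`k ≥ 1`, let `i₁,…,i_k, j ∈ [m]` be arbitrary, and let
`c = (g_{i₁}, (g_{i₂}, …, (g_{i_k}, g_j)…))` be the nested group commutator of
length `k+1`.  Then `(g_{i₁}, c) · c⁻² ∈ γ_{k+3}(RC_K)`.  (In the associated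
graded Lie algebra, `[ḡ_{i₁}, x] = h(x)` for a nested commutator `x`
beginning with `ḡ_{i₁}`.) -/
theorem grpComm_head_nested_eq_square {m : ℕ} (K : Finset (Finset (Fin m)))
    (hsub : ∀ I ∈ K, ∀ I' ⊆ I, I' ∈ K) (hempty : ∅ ∈ K)
    (hsingle : ∀ i : Fin m, ({i} : Finset (Fin m)) ∈ K) (hflag : IsFlag K)
    (k : ℕ) (hk : 1 ≤ k) (is : Fin k → Fin m) (j : Fin m) :
    grpComm (RCgen K (is ⟨0, hk⟩))
        ((List.ofFn is).foldr (fun t acc => grpComm (RCgen K t) acc) (RCgen K j)) *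
      (((List.ofFn is).foldr (fun t acc => grpComm (RCgen K t) acc) (RCgen K j)) ^ 2)⁻¹
      ∈ gamma (RC K) (k + 3) :=
  grpComm_head_nested_eq_square_general K k hk is j
end
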